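/- arXiv:1602.04309 — 3 statements merged into one kernel-verified Lean document; each statement's English description precedes it below -/
import Mathlib

section
/- Let (X, μ) be a finite measure space and let p ≥ q ≥ 1. If f_j, f ∈ L^q(X, μ) with f_j, f ≥ 0 almost everywhere, then ‖f_j − f‖_{L^q} → 0 if and only if ‖f_j^{q/p} − f^{q/p}‖_{L^p} → 0. -/
/-!
Put `r = q / p ∈ (0, 1]`. For `a, b ≥ 0`, concavity of `t ↦ t ^ r` gives the pointwise bounds
`|a ^ r - b ^ r| ≤ |a - b| ^ r` and `r |a - b| ≤ (a + b) ^ (1 - r) |a ^ r - b ^ r|`.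
Integrating the first gives `‖f_j ^ r - f ^ r‖_p ≤ ‖f_j - f‖_q ^ r`. The second, with Hölder's
inequality for `1/q = (1 - r)/q + 1/p`, gives
`‖f_j - f‖_q ≤ r⁻¹ ‖f_j + f‖_q ^ (1 - r) ‖f_j ^ r - f ^ r‖_p`, and `‖f_j‖_q ^ r = ‖f_j ^ r‖_p`
stays bounded once `f_j ^ r → f ^ r` in `L^p`.
-/

open MeasureTheory Filter Topology
open scoped ENNReal

namespace Real

lemma abs_rpow_sub_rpow_le_abs_sub_rpow {a b r : ℝ} (ha : 0 ≤ a) (hb : 0 ≤ b) (hr : 0 ≤ r)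
    (hr1 : r ≤ 1) : |a ^ r - b ^ r| ≤ |a - b| ^ r := by
  wlog hba : b ≤ a generalizing a b
  · rw [abs_sub_comm, abs_sub_comm a]
    exact this hb ha (le_of_not_ge hba)
  have hsub : a ^ r ≤ (a - b) ^ r + b ^ r := by
    simpa using rpow_add_le_add_rpow (sub_nonneg.2 hba) hb hr hr1
  rw [abs_of_nonneg (sub_nonneg.2 (rpow_le_rpow hb hba hr)), abs_of_nonneg (sub_nonneg.2 hba)]
  linarith

lemma abs_sub_le_mul_add_rpow_mul_abs_rpow_sub_rpow {a b r : ℝ} (ha : 0 ≤ a) (hb : 0 ≤ b)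
    (hr : 0 < r) (hr1 : r ≤ 1) : |a - b| ≤ r⁻¹ * (a + b) ^ (1 - r) * |a ^ r - b ^ r| := by
  wlog hba : b ≤ a generalizing a b
  · rw [abs_sub_comm, abs_sub_comm (a ^ r), add_comm]
    exact this hb ha (le_of_not_ge hba)
  rcases hba.eq_or_lt with rfl | hba'
  · simp
  have ha0 : 0 < a := hb.trans_lt hba'
  set t := b / a
  have ht0 : 0 ≤ t := div_nonneg hb ha0.le
  have hbern : t ^ r ≤ 1 + r * (t - 1) := by
    simpa using rpow_one_add_le_one_add_mul_self (s := t - 1) (by linarith) hr.le hr1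
  have hb_eq : b = a * t := (mul_div_cancel₀ b ha0.ne').symm
  have ha_eq : a = a ^ (1 - r) * a ^ r := by rw [← rpow_add ha0]; simp
  have hconc : r * (a - b) ≤ a ^ (1 - r) * (a ^ r - b ^ r) :=
    calc r * (a - b) = a ^ (1 - r) * a ^ r * (r * (1 - t)) := by rw [← ha_eq, hb_eq]; ring
      _ ≤ a ^ (1 - r) * a ^ r * (1 - t ^ r) := by gcongr; linarith
      _ = a ^ (1 - r) * (a ^ r - b ^ r) := by rw [hb_eq, mul_rpow ha0.le ht0]; ring
  have hpow : b ^ r ≤ a ^ r := rpow_le_rpow hb hba hr.le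
  rw [abs_of_nonneg (sub_nonneg.2 hba), abs_of_nonneg (sub_nonneg.2 hpow)]
  calc a - b = r⁻¹ * (r * (a - b)) := by field_simp
    _ ≤ r⁻¹ * (a ^ (1 - r) * (a ^ r - b ^ r)) := by gcongr
    _ ≤ r⁻¹ * ((a + b) ^ (1 - r) * (a ^ r - b ^ r)) := by gcongr; linarith
    _ = _ := by ring

end Real

namespace MeasureTheory

variable {α : Type*} [MeasurableSpace α] {μ : Measure α} {F G : α → ℝ} {p q : ℝ}

lemma eLpNorm_rpow_of_nonneg (hF : 0 ≤ᵐ[μ] F) {r : ℝ} (hr : 0 < r) (P : ℝ≥0∞) :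
    eLpNorm (fun x => F x ^ r) P μ = eLpNorm F (P * ENNReal.ofReal r) μ ^ r := by
  rw [← eLpNorm_norm_rpow F hr]
  refine eLpNorm_congr_ae ?_
  filter_upwards [hF] with x hx
  rw [Real.norm_of_nonneg hx]

lemma eLpNorm_rpow_sub_rpow_le (hF : 0 ≤ᵐ[μ] F) (hG : 0 ≤ᵐ[μ] G) (hq : 0 < q) (hqp : q ≤ p) :
    eLpNorm (fun x => F x ^ (q / p) - G x ^ (q / p)) (ENNReal.ofReal p) μ ≤
      eLpNorm (F - G) (ENNReal.ofReal q) μ ^ (q / p) := by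
  have hp : 0 < p := hq.trans_le hqp
  have hr : 0 < q / p := div_pos hq hp
  calc eLpNorm (fun x => F x ^ (q / p) - G x ^ (q / p)) (ENNReal.ofReal p) μ
      ≤ eLpNorm (fun x => ‖(F - G) x‖ ^ (q / p)) (ENNReal.ofReal p) μ := by
        refine eLpNorm_mono_ae_real ?_
        filter_upwards [hF, hG] with x hFx hGx
        exact Real.abs_rpow_sub_rpow_le_abs_sub_rpow hFx hGx hr.le ((div_le_one hp).2 hqp)
    _ = eLpNorm (F - G) (ENNReal.ofReal q) μ ^ (q / p) := by
        rw [eLpNorm_norm_rpow _ hr, ← ENNReal.ofReal_mul hp.le, mul_div_cancel₀ q hp.ne']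

lemma eLpNorm_sub_le_mul_eLpNorm_rpow_sub_rpow (hFm : AEStronglyMeasurable F μ)
    (hGm : AEStronglyMeasurable G μ) (hF : 0 ≤ᵐ[μ] F) (hG : 0 ≤ᵐ[μ] G) (hq : 0 < q)
    (hqp : q < p) :
    eLpNorm (F - G) (ENNReal.ofReal q) μ ≤
      ENNReal.ofReal (p / q) * eLpNorm (F + G) (ENNReal.ofReal q) μ ^ (1 - q / p) *
        eLpNorm (fun x => F x ^ (q / p) - G x ^ (q / p)) (ENNReal.ofReal p) μ := by
  have hp : 0 < p := hq.trans hqp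
  set r := q / p with hr_def
  have hr : 0 < r := div_pos hq hp
  have hr1 : r < 1 := (div_lt_one hp).2 hqp
  have : ENNReal.HolderTriple (ENNReal.ofReal (q / (1 - r))) (ENNReal.ofReal p)
      (ENNReal.ofReal q) := by
    refine ⟨?_⟩
    rw [← ENNReal.ofReal_inv_of_pos (div_pos hq (by linarith)), ← ENNReal.ofReal_inv_of_pos hp,
      ← ENNReal.ofReal_inv_of_pos hq, ← ENNReal.ofReal_add (by positivity) (by positivity)]
    congr 1
    rw [hr_def]
    field_simp
    ring
  have hFG : 0 ≤ᵐ[μ] F + G := by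
    filter_upwards [hF, hG] with x hFx hGx using add_nonneg hFx hGx
  set φ : α → ℝ := fun x => (F x + G x) ^ (1 - r)
  set ψ : α → ℝ := fun x => F x ^ r - G x ^ r
  have hφm : AEStronglyMeasurable φ μ :=
    ((hFm.add hGm).aemeasurable.pow_const _).aestronglyMeasurable
  have hψm : AEStronglyMeasurable ψ μ :=
    ((hFm.aemeasurable.pow_const _).sub (hGm.aemeasurable.pow_const _)).aestronglyMeasurable
  calc eLpNorm (F - G) (ENNReal.ofReal q) μ
      ≤ eLpNorm ((p / q) • (φ • ψ)) (ENNReal.ofReal q) μ := by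
        refine eLpNorm_mono_ae ?_
        filter_upwards [hF, hG] with x hFx hGx
        have := Real.abs_sub_le_mul_add_rpow_mul_abs_rpow_sub_rpow hFx hGx hr hr1.le
        simp only [Pi.sub_apply, Pi.smul_apply, Pi.mul_apply, smul_eq_mul, Real.norm_eq_abs,
          abs_mul, abs_of_nonneg (div_nonneg hp.le hq.le), φ, ψ,
          abs_of_nonneg (Real.rpow_nonneg (add_nonneg hFx hGx) _)]
        rwa [hr_def, inv_div, mul_assoc, ← hr_def] at this
    _ = ENNReal.ofReal (p / q) * eLpNorm (φ • ψ) (ENNReal.ofReal q) μ := by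
        rw [eLpNorm_const_smul, Real.enorm_of_nonneg (div_nonneg hp.le hq.le)]
    _ ≤ ENNReal.ofReal (p / q) *
          (eLpNorm φ (ENNReal.ofReal (q / (1 - r))) μ * eLpNorm ψ (ENNReal.ofReal p) μ) := by
        gcongr
        exact eLpNorm_smul_le_mul_eLpNorm hψm hφm
    _ = _ := by
        rw [show φ = fun x => (F + G) x ^ (1 - r) from rfl,
          eLpNorm_rpow_of_nonneg hFG (by linarith), ← ENNReal.ofReal_mul (by positivity),
          div_mul_cancel₀ q (by linarith), mul_assoc]

lemma eLpNorm_rpow_le_eLpNorm_rpow_sub_rpow_add (hFm : AEStronglyMeasurable F μ)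
    (hGm : AEStronglyMeasurable G μ) (hF : 0 ≤ᵐ[μ] F) (hG : 0 ≤ᵐ[μ] G) (hq : 0 < q)
    (hp : 1 ≤ p) :
    eLpNorm F (ENNReal.ofReal q) μ ^ (q / p) ≤
      eLpNorm (fun x => F x ^ (q / p) - G x ^ (q / p)) (ENNReal.ofReal p) μ +
        eLpNorm G (ENNReal.ofReal q) μ ^ (q / p) := by
  have hp0 : 0 < p := one_pos.trans_le hp
  have hr : 0 < q / p := div_pos hq hp0
  have hpr : ENNReal.ofReal p * ENNReal.ofReal (q / p) = ENNReal.ofReal q := by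
    rw [← ENNReal.ofReal_mul hp0.le, mul_div_cancel₀ q hp0.ne']
  rw [← hpr, ← eLpNorm_rpow_of_nonneg hF hr, ← eLpNorm_rpow_of_nonneg hG hr]
  calc eLpNorm (fun x => F x ^ (q / p)) (ENNReal.ofReal p) μ
      = eLpNorm ((fun x => F x ^ (q / p) - G x ^ (q / p)) + fun x => G x ^ (q / p))
          (ENNReal.ofReal p) μ := by
        congr 1
        ext x
        simp only [Pi.add_apply, sub_add_cancel]
    _ ≤ _ := eLpNorm_add_le
        ((hFm.aemeasurable.pow_const _).sub (hGm.aemeasurable.pow_const _)).aestronglyMeasurable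
        (hGm.aemeasurable.pow_const _).aestronglyMeasurable (ENNReal.one_le_ofReal.2 hp)

variable {ι : Type*} {l : Filter ι} {f : ι → α → ℝ}

theorem tendsto_eLpNorm_rpow_sub_rpow_of_tendsto_eLpNorm_sub (hf : ∀ i, 0 ≤ᵐ[μ] f i)
    (hG : 0 ≤ᵐ[μ] G) (hq : 0 < q) (hqp : q ≤ p)
    (h : Tendsto (fun i => eLpNorm (f i - G) (ENNReal.ofReal q) μ) l (𝓝 0)) :
    Tendsto (fun i => eLpNorm (fun x => f i x ^ (q / p) - G x ^ (q / p)) (ENNReal.ofReal p) μ)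
      l (𝓝 0) := by
  have hpow := h.ennrpow_const (q / p)
  rw [ENNReal.zero_rpow_of_pos (div_pos hq (hq.trans_le hqp))] at hpow
  exact tendsto_of_tendsto_of_tendsto_of_le_of_le tendsto_const_nhds hpow (fun _ => zero_le)
    fun i => eLpNorm_rpow_sub_rpow_le (hf i) hG hq hqp

theorem tendsto_eLpNorm_sub_of_tendsto_eLpNorm_rpow_sub_rpow
    (hfm : ∀ i, AEStronglyMeasurable (f i) μ)
    (hG : MemLp G (ENNReal.ofReal q) μ) (hf : ∀ i, 0 ≤ᵐ[μ] f i) (hGpos : 0 ≤ᵐ[μ] G)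
    (hq : 1 ≤ q) (hqp : q < p)
    (h : Tendsto (fun i => eLpNorm (fun x => f i x ^ (q / p) - G x ^ (q / p))
      (ENNReal.ofReal p) μ) l (𝓝 0)) :
    Tendsto (fun i => eLpNorm (f i - G) (ENNReal.ofReal q) μ) l (𝓝 0) := by
  have hq0 : 0 < q := one_pos.trans_le hq
  have hr : 0 < q / p := div_pos hq0 (hq0.trans hqp)
  set M := eLpNorm G (ENNReal.ofReal q) μ
  set B := (1 + M ^ (q / p)) ^ (q / p)⁻¹ + M
  have hB : B ≠ ⊤ := by
    have := hG.eLpNorm_ne_top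
    finiteness
  have hbound : ∀ᶠ i in l, eLpNorm (f i + G) (ENNReal.ofReal q) μ ≤ B := by
    filter_upwards [h.eventually (gt_mem_nhds zero_lt_one)] with i hi
    have hfi : eLpNorm (f i) (ENNReal.ofReal q) μ ≤ (1 + M ^ (q / p)) ^ (q / p)⁻¹ := by
      rw [ENNReal.le_rpow_inv_iff hr]
      exact (eLpNorm_rpow_le_eLpNorm_rpow_sub_rpow_add (hfm i) hG.1 (hf i) hGpos hq0
        (hq.trans hqp.le)).trans (add_le_add_left hi.le _)
    exact (eLpNorm_add_le (hfm i) hG.1 (ENNReal.one_le_ofReal.2 hq)).trans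
      (add_le_add_left hfi M)
  have hlim : Tendsto (fun i => ENNReal.ofReal (p / q) * B ^ (1 - q / p) *
      eLpNorm (fun x => f i x ^ (q / p) - G x ^ (q / p)) (ENNReal.ofReal p) μ) l (𝓝 0) := by
    simpa using ENNReal.Tendsto.const_mul h (Or.inr (by finiteness))
  refine tendsto_of_tendsto_of_tendsto_of_le_of_le' tendsto_const_nhds hlim
    (Eventually.of_forall fun _ => zero_le) ?_
  filter_upwards [hbound] with i hi
  refine (eLpNorm_sub_le_mul_eLpNorm_rpow_sub_rpow (hfm i) hG.1 (hf i) hGpos hq0 hqp).trans ?_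
  gcongr
  exact sub_nonneg.2 ((div_le_one (hq0.trans hqp)).2 hqp.le)

end MeasureTheory

theorem stmt0_general {X : Type*} [MeasurableSpace X] (μ : Measure X)
    (p q : ℝ) (hq : 1 ≤ q) (hpq : q ≤ p)
    (f : ℕ → X → ℝ) (g : X → ℝ)
    (hf : ∀ j, MemLp (f j) (ENNReal.ofReal q) μ)
    (hg : MemLp g (ENNReal.ofReal q) μ)
    (hfpos : ∀ j, 0 ≤ᵐ[μ] f j) (hgpos : 0 ≤ᵐ[μ] g) :
    Tendsto (fun j => eLpNorm (f j - g) (ENNReal.ofReal q) μ) atTop (𝓝 0) ↔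
    Tendsto (fun j =>
        eLpNorm (fun x => (f j x) ^ (q / p) - (g x) ^ (q / p)) (ENNReal.ofReal p) μ)
      atTop (𝓝 0) := by
  have hq0 : 0 < q := one_pos.trans_le hq
  rcases hpq.eq_or_lt with rfl | hqp
  · simp only [div_self hq0.ne', Real.rpow_one]
    rfl
  exact ⟨tendsto_eLpNorm_rpow_sub_rpow_of_tendsto_eLpNorm_sub hfpos hgpos hq0 hpq,
    tendsto_eLpNorm_sub_of_tendsto_eLpNorm_rpow_sub_rpow (fun j => (hf j).1) hg hfpos hgpos hq hqp⟩

/-- Vitali-type lemma: for nonnegative `f_j, f ∈ L^q`, `‖f_j - f‖_{L^q} → 0` iff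
`‖f_j^{q/p} - f^{q/p}‖_{L^p} → 0`, where `1 ≤ q ≤ p < ∞`. -/
theorem stmt0 {X : Type*} [MeasurableSpace X] (μ : Measure X) [IsFiniteMeasure μ]
    (p q : ℝ) (hq : 1 ≤ q) (hpq : q ≤ p)
    (f : ℕ → X → ℝ) (g : X → ℝ)
    (hf : ∀ j, MemLp (f j) (ENNReal.ofReal q) μ)
    (hg : MemLp g (ENNReal.ofReal q) μ)
    (hfpos : ∀ j, 0 ≤ᵐ[μ] f j) (hgpos : 0 ≤ᵐ[μ] g) :
    Tendsto (fun j => eLpNorm (f j - g) (ENNReal.ofReal q) μ) atTop (𝓝 0) ↔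
    Tendsto (fun j =>
        eLpNorm (fun x => (f j x) ^ (q / p) - (g x) ^ (q / p)) (ENNReal.ofReal p) μ)
      atTop (𝓝 0) :=
  stmt0_general μ p q hq hpq f g hf hg hfpos hgpos
end

section
/- Let (X, μ) be a finite measure space and f ≥ 0 a measurable function with ∫_X f log(f) dμ < ∞ (with the convention 0·log 0 = 0). Then there exists a sequence of measurable functions f_k with f_k > 0 everywhere, f_k bounded above and bounded away from 0, such that ∫_X |f − f_k| dμ → 0 and ∫_X f (log f − log f_k) dμ → 0. -/
/-!
Clamp `f` to `[c⁻¹, c]` and let `c → ∞`. Pointwise the clamped functions converge to `f`, and the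
two integrands are dominated by `f + 1` and `|f log f| + 1`, both integrable on a finite measure
space because `f ≤ f log f + 1`; dominated convergence gives both limits.
-/

open MeasureTheory Filter Topology Real

noncomputable def clampInv (c a : ℝ) : ℝ := max c⁻¹ (min a c)

lemma inv_le_clampInv (c a : ℝ) : c⁻¹ ≤ clampInv c a := le_max_left _ _

lemma clampInv_le {c : ℝ} (a : ℝ) (hc : 1 ≤ c) : clampInv c a ≤ c :=
  max_le ((inv_le_one_of_one_le₀ hc).trans hc) (min_le_right _ _)

lemma continuous_clampInv (c : ℝ) : Continuous (clampInv c) :=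
  continuous_const.max (continuous_id.min continuous_const)

lemma tendsto_clampInv {a : ℝ} (ha : 0 ≤ a) : Tendsto (fun c => clampInv c a) atTop (𝓝 a) := by
  have hmin : Tendsto (fun c => min a c) atTop (𝓝 a) :=
    tendsto_const_nhds.congr' <| (eventually_ge_atTop a).mono fun c h => (min_eq_left h).symm
  simpa [clampInv, max_eq_right ha] using tendsto_inv_atTop_zero.max hmin

lemma abs_sub_clampInv_le {a c : ℝ} (ha : 0 ≤ a) (hc : 1 ≤ c) : |a - clampInv c a| ≤ a + 1 := by
  have hlow : 0 ≤ clampInv c a := (inv_nonneg.2 (zero_le_one.trans hc)).trans (inv_le_clampInv c a)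
  have hup : clampInv c a ≤ a + 1 :=
    max_le ((inv_le_one_of_one_le₀ hc).trans (by linarith)) ((min_le_left _ _).trans (by linarith))
  rw [abs_le]
  constructor <;> linarith

lemma abs_mul_log_sub_log_clampInv_le {a c : ℝ} (ha : 0 ≤ a) (hc : 1 ≤ c) :
    |a * (log a - log (clampInv c a))| ≤ |a * log a| + 1 := by
  have hc0 : 0 < c := zero_lt_one.trans_le hc
  rcases le_or_gt c a with hca | hac
  · have hclamp : clampInv c a = c := by
      simp [clampInv, hca, (inv_le_one_of_one_le₀ hc).trans hc]
    rw [hclamp, abs_of_nonneg (mul_nonneg ha (sub_nonneg.2 (log_le_log hc0 hca))),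
      abs_of_nonneg (mul_log_nonneg (hc.trans hca))]
    nlinarith [log_nonneg hc]
  rcases le_or_gt c⁻¹ a with hia | hai
  · have hclamp : clampInv c a = a := by simp [clampInv, hac.le, hia]
    simp only [hclamp, sub_self, mul_zero, abs_zero]
    positivity
  have hclamp : clampInv c a = c⁻¹ := by simp [clampInv, hac.le, hai.le]
  have hlog : a * log c ≤ 1 := calc
    a * log c ≤ c⁻¹ * log c := mul_le_mul_of_nonneg_right hai.le (log_nonneg hc)
    _ ≤ c⁻¹ * c := by gcongr; exact (log_le_sub_one_of_pos hc0).trans (by linarith)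
    _ = 1 := inv_mul_cancel₀ hc0.ne'
  calc |a * (log a - log (clampInv c a))| = |a * log a + a * log c| := by
        rw [hclamp, log_inv]; ring_nf
    _ ≤ |a * log a| + |a * log c| := abs_add_le _ _
    _ ≤ |a * log a| + 1 := by rw [abs_of_nonneg (mul_nonneg ha (log_nonneg hc))]; linarith

section Integrals

variable {X : Type*} [MeasurableSpace X] {μ : Measure X} [IsFiniteMeasure μ] {f : X → ℝ}

theorem integrable_of_integrable_mul_log (hf : AEStronglyMeasurable f μ)
    (hpos : ∀ᵐ x ∂μ, 0 ≤ f x) (hent : Integrable (fun x => f x * log (f x)) μ) :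
    Integrable f μ := by
  refine (hent.abs.add (integrable_const 1)).mono' hf ?_
  filter_upwards [hpos] with x hx
  rw [norm_of_nonneg hx, Pi.add_apply]
  linarith [self_sub_one_le_mul_log hx, le_abs_self (f x * log (f x))]

variable {c : ℕ → ℝ}

theorem tendsto_integral_abs_sub_clampInv (hf : Integrable f μ) (hpos : ∀ᵐ x ∂μ, 0 ≤ f x)
    (hc1 : ∀ k, 1 ≤ c k) (hc : Tendsto c atTop atTop) :
    Tendsto (fun k => ∫ x, |f x - clampInv (c k) (f x)| ∂μ) atTop (𝓝 0) := by
  have hmeas (k : ℕ) : AEStronglyMeasurable (fun x => |f x - clampInv (c k) (f x)|) μ :=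
    ((continuous_id.sub (continuous_clampInv (c k))).abs).comp_aestronglyMeasurable
      hf.aestronglyMeasurable
  have hlim : ∀ᵐ x ∂μ, Tendsto (fun k => |f x - clampInv (c k) (f x)|) atTop (𝓝 0) := by
    filter_upwards [hpos] with x hx
    simpa using (((tendsto_clampInv hx).comp hc).const_sub (f x)).abs
  have := tendsto_integral_of_dominated_convergence (fun x => f x + 1) hmeas
    (hf.add (integrable_const 1))
    (fun k => by
      filter_upwards [hpos] with x hx
      rw [norm_of_nonneg (abs_nonneg _)]
      exact abs_sub_clampInv_le hx (hc1 k))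
    hlim
  simpa using this

theorem tendsto_integral_mul_log_sub_log_clampInv (hf : AEStronglyMeasurable f μ)
    (hpos : ∀ᵐ x ∂μ, 0 ≤ f x) (hent : Integrable (fun x => f x * log (f x)) μ)
    (hc1 : ∀ k, 1 ≤ c k) (hc : Tendsto c atTop atTop) :
    Tendsto (fun k => ∫ x, f x * (log (f x) - log (clampInv (c k) (f x))) ∂μ) atTop (𝓝 0) := by
  have hmeas (k : ℕ) :
      AEStronglyMeasurable (fun x => f x * (log (f x) - log (clampInv (c k) (f x)))) μ := by
    have hlog : Measurable fun a => log a - log (clampInv (c k) a) :=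
      measurable_log.sub (measurable_log.comp (continuous_clampInv (c k)).measurable)
    exact (hf.aemeasurable.mul (hlog.comp_aemeasurable hf.aemeasurable)).aestronglyMeasurable
  have hlim : ∀ᵐ x ∂μ,
      Tendsto (fun k => f x * (log (f x) - log (clampInv (c k) (f x)))) atTop (𝓝 0) := by
    filter_upwards [hpos] with x hx
    rcases hx.eq_or_lt with h0 | h0
    · simp [← h0]
    have hlog := (continuousAt_log h0.ne').tendsto.comp ((tendsto_clampInv hx).comp hc)
    simpa using (hlog.const_sub (log (f x))).const_mul (f x)
  have := tendsto_integral_of_dominated_convergence (fun x => |f x * log (f x)| + 1) hmeas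
    (hent.abs.add (integrable_const 1))
    (fun k => by
      filter_upwards [hpos] with x hx
      rw [Real.norm_eq_abs]
      exact abs_mul_log_sub_log_clampInv_le hx (hc1 k))
    hlim
  simpa using this

end Integrals

/-- Approximation lemma: if `f ≥ 0` has finite entropy `∫ f log f dμ < ∞`, then there are
functions `f_k`, bounded between positive constants, with `∫ |f - f_k| dμ → 0` and
`∫ f (log f - log f_k) dμ → 0`. -/
theorem stmt1 {X : Type*} [MeasurableSpace X] (μ : Measure X) [IsFiniteMeasure μ]
    (f : X → ℝ) (hmeas : Measurable f) (hpos : ∀ x, 0 ≤ f x)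
    (hent : Integrable (fun x => f x * Real.log (f x)) μ) :
    ∃ fk : ℕ → X → ℝ,
      (∀ k, Measurable (fk k)) ∧
      (∀ k, ∃ m M : ℝ, 0 < m ∧ ∀ x, m ≤ fk k x ∧ fk k x ≤ M) ∧
      Tendsto (fun k => ∫ x, |f x - fk k x| ∂μ) atTop (𝓝 0) ∧
      Tendsto (fun k => ∫ x, f x * (Real.log (f x) - Real.log (fk k x)) ∂μ) atTop (𝓝 0) := by
  have hc1 : ∀ k : ℕ, (1 : ℝ) ≤ k + 1 := fun k => le_add_of_nonneg_left k.cast_nonneg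
  have hc : Tendsto (fun k : ℕ => (k : ℝ) + 1) atTop atTop :=
    tendsto_atTop_add_const_right _ 1 tendsto_natCast_atTop_atTop
  have hpos' : ∀ᵐ x ∂μ, 0 ≤ f x := ae_of_all _ hpos
  have hf : Integrable f μ :=
    integrable_of_integrable_mul_log hmeas.aestronglyMeasurable hpos' hent
  refine ⟨fun k x => clampInv (k + 1) (f x),
    fun k => (continuous_clampInv _).measurable.comp hmeas,
    fun k => ⟨((k : ℝ) + 1)⁻¹, k + 1, by positivity,
      fun x => ⟨inv_le_clampInv _ _, clampInv_le _ (hc1 k)⟩⟩,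
    tendsto_integral_abs_sub_clampInv hf hpos' hc1 hc,
    tendsto_integral_mul_log_sub_log_clampInv hmeas.aestronglyMeasurable hpos' hent hc1 hc⟩
end

section
/- Let (X, μ) be a finite measure space, q ≥ 1, and f_j, f_k, f nonnegative functions in L^q(X, μ). If ∫_X |(f_j)^{1/s} − (f_k)^{1/s}|^{qs} dμ → 0 as j, k → ∞ for some s ≥ 1, then ∫_X |f_j − f_k|^q dμ → 0 as j, k → ∞, and conversely. -/
open MeasureTheory Filter Topology

open scoped ENNReal

/-!
Put `g = f ^ (1 / s)` and `p = q * s`. The pointwise inequalities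
`|a ^ (1/s) - b ^ (1/s)| ≤ |a - b| ^ (1/s)` and `|a ^ s - b ^ s| ≤ s (a + b) ^ (s - 1) |a - b|`
give `‖g j - g k‖_p ≤ ‖f j - f k‖_q ^ (1/s)` and, by Hölder with exponents `s` and `s / (s - 1)`,
`‖f j - f k‖_q ≤ s ‖g j - g k‖_p ‖g j + g k‖_p ^ (s - 1)`. Since an `L^p`-Cauchy sequence is
eventually bounded in `L^p`, each Cauchy property implies the other.
-/

namespace Real

theorem abs_rpow_sub_rpow_le_abs_sub_rpow_s8 {x y r : ℝ} (hx : 0 ≤ x) (hy : 0 ≤ y) (hr0 : 0 ≤ r)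
    (hr1 : r ≤ 1) : |x ^ r - y ^ r| ≤ |x - y| ^ r := by
  wlog hyx : y ≤ x generalizing x y
  · rw [abs_sub_comm, abs_sub_comm x]
    exact this hy hx (le_of_not_ge hyx)
  have hsub : x ^ r ≤ (x - y) ^ r + y ^ r := by
    simpa using rpow_add_le_add_rpow (sub_nonneg.2 hyx) hy hr0 hr1
  rw [abs_of_nonneg (sub_nonneg.2 (rpow_le_rpow hy hyx hr0)), abs_of_nonneg (sub_nonneg.2 hyx)]
  linarith

theorem abs_rpow_sub_rpow_le_mul {x y s : ℝ} (hx : 0 ≤ x) (hy : 0 ≤ y) (hs : 1 ≤ s) :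
    |x ^ s - y ^ s| ≤ s * (x + y) ^ (s - 1) * |x - y| := by
  have hderiv : ∀ t ∈ Set.Icc 0 (x + y),
      HasDerivWithinAt (fun t : ℝ => t ^ s) (s * t ^ (s - 1)) (Set.Icc 0 (x + y)) t :=
    fun t _ => (hasDerivAt_rpow_const (Or.inr hs)).hasDerivWithinAt
  have hbound : ∀ t ∈ Set.Icc 0 (x + y), ‖s * t ^ (s - 1)‖ ≤ s * (x + y) ^ (s - 1) := by
    rintro t ⟨ht0, htxy⟩
    rw [norm_of_nonneg (by positivity)]
    gcongr
  simpa only [Real.norm_eq_abs] using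
    (convex_Icc 0 (x + y)).norm_image_sub_le_of_norm_hasDerivWithin_le hderiv hbound
      ⟨hy, le_add_of_nonneg_left hx⟩ ⟨hx, le_add_of_nonneg_right hy⟩

end Real

namespace ENNReal

theorem tendsto_rpow_nhds_zero_iff {ι : Type*} {l : Filter ι} {f : ι → ℝ≥0∞} {p : ℝ}
    (hp : 0 < p) : Tendsto (fun i => f i ^ p) l (𝓝 0) ↔ Tendsto f l (𝓝 0) := by
  refine ⟨fun h => ?_, fun h => ?_⟩
  · simpa [zero_rpow_of_pos, hp, rpow_rpow_inv hp.ne'] using h.ennrpow_const p⁻¹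
  · simpa [zero_rpow_of_pos hp] using h.ennrpow_const p

theorem tendsto_nhds_zero_of_eventually_le_mul_rpow {ι : Type*} {l : Filter ι}
    {a b : ι → ℝ≥0∞} {C : ℝ≥0∞} {r : ℝ} (hC : C ≠ ∞) (hr : 0 < r)
    (ha : Tendsto a l (𝓝 0)) (hb : ∀ᶠ i in l, b i ≤ C * a i ^ r) : Tendsto b l (𝓝 0) := by
  have hCa : Tendsto (fun i => C * a i ^ r) l (𝓝 0) := by
    simpa [zero_rpow_of_pos hr] using
      Tendsto.const_mul (ha.ennrpow_const r) (Or.inr hC)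
  exact tendsto_of_tendsto_of_tendsto_of_le_of_le' tendsto_const_nhds hCa
    (Eventually.of_forall fun _ => zero_le) hb

end ENNReal

namespace MeasureTheory

variable {X : Type*} [MeasurableSpace X] {μ : Measure X}

theorem MemLp.integral_abs_rpow_eq {f : X → ℝ} {p : ℝ} (hp : 0 < p)
    (hf : MemLp f (ENNReal.ofReal p) μ) :
    ∫ x, |f x| ^ p ∂μ = (eLpNorm f (ENNReal.ofReal p) μ ^ p).toReal := by
  have hI : 0 ≤ ∫ x, |f x| ^ p ∂μ := integral_nonneg fun x => by positivity
  rw [hf.eLpNorm_eq_integral_rpow_norm (by simpa using hp) ENNReal.ofReal_ne_top,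
    ENNReal.toReal_ofReal hp.le, ENNReal.ofReal_rpow_of_nonneg (by positivity) hp.le]
  simp_rw [Real.norm_eq_abs]
  rw [← Real.rpow_mul hI, inv_mul_cancel₀ hp.ne', Real.rpow_one, ENNReal.toReal_ofReal hI]

theorem tendsto_eLpNorm_sub_nhds_zero_iff {h : ℕ → X → ℝ} {p : ℝ} (hp : 0 < p)
    (hh : ∀ j, MemLp (h j) (ENNReal.ofReal p) μ) :
    Tendsto (fun jk : ℕ × ℕ => eLpNorm (h jk.1 - h jk.2) (ENNReal.ofReal p) μ) atTop (𝓝 0) ↔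
      ∀ ε > 0, ∃ N, ∀ j ≥ N, ∀ k ≥ N, ∫ x, |h j x - h k x| ^ p ∂μ < ε := by
  have hfin : ∀ jk : ℕ × ℕ, eLpNorm (h jk.1 - h jk.2) (ENNReal.ofReal p) μ ^ p ≠ ∞ := fun jk =>
    ENNReal.rpow_ne_top_of_nonneg hp.le ((hh jk.1).sub (hh jk.2)).eLpNorm_ne_top
  rw [← ENNReal.tendsto_rpow_nhds_zero_iff hp,
    ← ENNReal.tendsto_toReal_iff hfin ENNReal.zero_ne_top, ENNReal.toReal_zero, Metric.tendsto_nhds]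
  simp_rw [eventually_atTop_prod_self', Real.dist_eq, sub_zero, ENNReal.abs_toReal]
  simp_rw [← ((hh _).sub (hh _)).integral_abs_rpow_eq hp]
  rfl

theorem exists_eventually_eLpNorm_le_of_tendsto_eLpNorm_sub {E : Type*} [NormedAddCommGroup E]
    {g : ℕ → X → E} {p : ℝ≥0∞} (hg : ∀ j, MemLp (g j) p μ)
    (h : Tendsto (fun jk : ℕ × ℕ => eLpNorm (g jk.1 - g jk.2) p μ) atTop (𝓝 0)) :
    ∃ R ≠ ∞, ∀ᶠ j in atTop, eLpNorm (g j) p μ ≤ R := by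
  obtain ⟨N, hN⟩ := eventually_atTop_prod_self'.1 (ENNReal.tendsto_nhds_zero.1 h 1 one_pos)
  refine ⟨ENNReal.LpAddConst p * (1 + eLpNorm (g N) p μ),
    ENNReal.mul_ne_top (ENNReal.LpAddConst_lt_top p).ne (by finiteness [(hg N).eLpNorm_ne_top]),
    eventually_atTop.2 ⟨N, fun j hj => ?_⟩⟩
  calc eLpNorm (g j) p μ = eLpNorm (g j - g N + g N) p μ := by rw [sub_add_cancel]
    _ ≤ ENNReal.LpAddConst p * (eLpNorm (g j - g N) p μ + eLpNorm (g N) p μ) :=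
        eLpNorm_add_le' ((hg j).1.sub (hg N).1) (hg N).1 p
    _ ≤ ENNReal.LpAddConst p * (1 + eLpNorm (g N) p μ) := by gcongr; exact hN j hj N le_rfl

theorem eLpNorm_rpow_sub_rpow_le_s8 (p : ℝ≥0∞) {u v : X → ℝ} (hu : 0 ≤ u) (hv : 0 ≤ v) {r : ℝ}
    (hr0 : 0 < r) (hr1 : r ≤ 1) :
    eLpNorm (fun x => u x ^ r - v x ^ r) p μ ≤ eLpNorm (u - v) (p * ENNReal.ofReal r) μ ^ r := by
  calc eLpNorm (fun x => u x ^ r - v x ^ r) p μ ≤ eLpNorm (fun x => ‖(u - v) x‖ ^ r) p μ :=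
        eLpNorm_mono_real fun x =>
          Real.abs_rpow_sub_rpow_le_abs_sub_rpow_s8 (hu x) (hv x) hr0.le hr1
    _ = eLpNorm (u - v) (p * ENNReal.ofReal r) μ ^ r := eLpNorm_norm_rpow _ hr0

theorem eLpNorm_rpow_sub_rpow_le_mul {u v : X → ℝ} (hu : 0 ≤ u) (hv : 0 ≤ v)
    (hum : AEStronglyMeasurable u μ) (hvm : AEStronglyMeasurable v μ) {q s : ℝ} (hq : 0 < q)
    (hs : 1 ≤ s) :
    eLpNorm (fun x => u x ^ s - v x ^ s) (ENNReal.ofReal q) μ ≤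
      ENNReal.ofReal s * eLpNorm (u - v) (ENNReal.ofReal (q * s)) μ *
        eLpNorm (u + v) (ENNReal.ofReal (q * s)) μ ^ (s - 1) := by
  rcases hs.eq_or_lt with rfl | hs
  · simp only [Real.rpow_one, sub_self, ENNReal.rpow_zero, mul_one, ENNReal.ofReal_one, one_mul]
    rfl
  have hs0 : 0 < s := zero_lt_one.trans hs
  have hs1 : 0 < s - 1 := sub_pos.2 hs
  have : ENNReal.HolderTriple (.ofReal (q * s)) (.ofReal (q * s / (s - 1))) (.ofReal q) :=
    Real.HolderTriple.ennrealOfReal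
      { inv_add_inv_eq_inv := by field_simp; ring
        left_pos := by positivity
        right_pos := by positivity }
  calc eLpNorm (fun x => u x ^ s - v x ^ s) (ENNReal.ofReal q) μ
      ≤ eLpNorm (fun x => s * |(u - v) x| * ‖(u + v) x‖ ^ (s - 1)) (ENNReal.ofReal q) μ := by
        refine eLpNorm_mono_real fun x => ?_
        rw [Real.norm_eq_abs, Pi.add_apply, Real.norm_of_nonneg (add_nonneg (hu x) (hv x))]
        calc |u x ^ s - v x ^ s| ≤ s * (u x + v x) ^ (s - 1) * |u x - v x| :=
              Real.abs_rpow_sub_rpow_le_mul (hu x) (hv x) hs.le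
          _ = _ := by rw [mul_right_comm]; rfl
    _ ≤ ENNReal.ofReal s * eLpNorm (u - v) (ENNReal.ofReal (q * s)) μ *
          eLpNorm (fun x => ‖(u + v) x‖ ^ (s - 1)) (ENNReal.ofReal (q * s / (s - 1))) μ :=
        eLpNorm_le_eLpNorm_mul_eLpNorm'_of_norm (hum.sub hvm)
          ((hum.add hvm).norm.aemeasurable.pow_const _).aestronglyMeasurable
          (fun a b => s * |a| * b) s.toNNReal
          (ae_of_all _ fun _ => by simp [abs_of_pos hs0, hs0.le])
    _ = _ := by
        rw [eLpNorm_norm_rpow _ hs1, ← ENNReal.ofReal_mul (by positivity),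
          div_mul_cancel₀ _ hs1.ne']

theorem tendsto_eLpNorm_rpow_sub_rpow_of_le_one {ι : Type*} {l : Filter ι} (p : ℝ≥0∞)
    {u v : ι → X → ℝ} (hu : ∀ i, 0 ≤ u i) (hv : ∀ i, 0 ≤ v i) {r : ℝ} (hr0 : 0 < r) (hr1 : r ≤ 1)
    (h : Tendsto (fun i => eLpNorm (u i - v i) (p * ENNReal.ofReal r) μ) l (𝓝 0)) :
    Tendsto (fun i => eLpNorm (fun x => u i x ^ r - v i x ^ r) p μ) l (𝓝 0) :=
  ENNReal.tendsto_nhds_zero_of_eventually_le_mul_rpow ENNReal.one_ne_top hr0 h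
    (Eventually.of_forall fun i => by
      simpa only [one_mul] using eLpNorm_rpow_sub_rpow_le_s8 p (hu i) (hv i) hr0 hr1)

theorem tendsto_eLpNorm_rpow_sub_rpow {g : ℕ → X → ℝ} {q s : ℝ} (hq : 0 < q) (hs : 1 ≤ s)
    (hg0 : ∀ j, 0 ≤ g j) (hg : ∀ j, MemLp (g j) (ENNReal.ofReal (q * s)) μ)
    (h : Tendsto (fun jk : ℕ × ℕ => eLpNorm (g jk.1 - g jk.2) (ENNReal.ofReal (q * s)) μ)
      atTop (𝓝 0)) :
    Tendsto (fun jk : ℕ × ℕ => eLpNorm (fun x => g jk.1 x ^ s - g jk.2 x ^ s) (ENNReal.ofReal q) μ)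
      atTop (𝓝 0) := by
  obtain ⟨R, hR, hgR⟩ := exists_eventually_eLpNorm_le_of_tendsto_eLpNorm_sub hg h
  set c := ENNReal.LpAddConst (ENNReal.ofReal (q * s))
  have hc : c ≠ ∞ := (ENNReal.LpAddConst_lt_top _).ne
  refine ENNReal.tendsto_nhds_zero_of_eventually_le_mul_rpow
    (C := ENNReal.ofReal s * (c * (R + R)) ^ (s - 1)) (by finiteness) one_pos h ?_
  have hgR₂ : ∀ᶠ jk : ℕ × ℕ in atTop,
      eLpNorm (g jk.1) (ENNReal.ofReal (q * s)) μ ≤ R ∧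
        eLpNorm (g jk.2) (ENNReal.ofReal (q * s)) μ ≤ R := by
    rw [← prod_atTop_atTop_eq]
    exact hgR.prod_mk hgR
  filter_upwards [hgR₂] with ⟨j, k⟩ ⟨hj, hk⟩
  calc eLpNorm (fun x => g j x ^ s - g k x ^ s) (ENNReal.ofReal q) μ
      ≤ ENNReal.ofReal s * eLpNorm (g j - g k) (ENNReal.ofReal (q * s)) μ *
          eLpNorm (g j + g k) (ENNReal.ofReal (q * s)) μ ^ (s - 1) :=
        eLpNorm_rpow_sub_rpow_le_mul (hg0 j) (hg0 k) (hg j).1 (hg k).1 hq hs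
    _ ≤ ENNReal.ofReal s * eLpNorm (g j - g k) (ENNReal.ofReal (q * s)) μ *
          (c * (R + R)) ^ (s - 1) := by
        gcongr
        exact (eLpNorm_add_le' (hg j).1 (hg k).1 _).trans (by gcongr)
    _ = _ := by rw [ENNReal.rpow_one]; ring

end MeasureTheory

theorem stmt8_general {X : Type*} [MeasurableSpace X] (μ : Measure X)
    (q s : ℝ) (hq : 1 ≤ q) (hs : 1 ≤ s)
    (f : ℕ → X → ℝ) (hpos : ∀ j x, 0 ≤ f j x)
    (hL : ∀ j, MemLp (f j) (ENNReal.ofReal q) μ) :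
    (∀ ε > (0 : ℝ), ∃ N, ∀ j ≥ N, ∀ k ≥ N,
        ∫ x, |(f j x) ^ (1 / s) - (f k x) ^ (1 / s)| ^ (q * s) ∂μ < ε) ↔
    (∀ ε > (0 : ℝ), ∃ N, ∀ j ≥ N, ∀ k ≥ N,
        ∫ x, |f j x - f k x| ^ q ∂μ < ε) := by
  have hq0 : 0 < q := by linarith
  have hs0 : 0 < s := by linarith
  set g : ℕ → X → ℝ := fun j x => f j x ^ (1 / s)
  have hg0 : ∀ j, 0 ≤ g j := fun j x => Real.rpow_nonneg (hpos j x) _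
  have hexp : ENNReal.ofReal (q * s) * ENNReal.ofReal (1 / s) = ENNReal.ofReal q := by
    rw [← ENNReal.ofReal_mul (by positivity), mul_assoc, mul_one_div_cancel hs0.ne', mul_one]
  have hgL : ∀ j, MemLp (g j) (ENNReal.ofReal (q * s)) μ := fun j => by
    have := (hL j).norm_rpow_div (ENNReal.ofReal (1 / s))
    rw [ENNReal.toReal_ofReal (by positivity), ← hexp,
      ENNReal.mul_div_cancel_right (by simpa using hs0) ENNReal.ofReal_ne_top] at this
    simpa only [Real.norm_of_nonneg (hpos j _)] using this
  have hgf : ∀ j k, (fun x => g j x ^ s - g k x ^ s) = f j - f k := fun j k => funext fun x => by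
    simp [g, one_div, Real.rpow_inv_rpow (hpos _ x) hs0.ne']
  refine (tendsto_eLpNorm_sub_nhds_zero_iff (by positivity) hgL).symm.trans
    (Iff.trans ?_ (tendsto_eLpNorm_sub_nhds_zero_iff hq0 hL))
  constructor
  · intro h
    simpa only [hgf] using tendsto_eLpNorm_rpow_sub_rpow hq0 hs hg0 hgL h
  · intro h
    exact tendsto_eLpNorm_rpow_sub_rpow_of_le_one _ (fun _ => hpos _) (fun _ => hpos _)
      (by positivity) ((div_le_one hs0).2 hs) (hexp ▸ h)

/-- A sequence of nonnegative `L^q` functions is `L^q`-Cauchy iff the sequence of their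
`1/s`-th powers is `L^{qs}`-Cauchy (`s ≥ 1`). -/
theorem stmt8 {X : Type*} [MeasurableSpace X] (μ : Measure X) [IsFiniteMeasure μ]
    (q s : ℝ) (hq : 1 ≤ q) (hs : 1 ≤ s)
    (f : ℕ → X → ℝ) (hmeas : ∀ j, Measurable (f j)) (hpos : ∀ j x, 0 ≤ f j x)
    (hL : ∀ j, MemLp (f j) (ENNReal.ofReal q) μ) :
    (∀ ε > (0 : ℝ), ∃ N, ∀ j ≥ N, ∀ k ≥ N,
        ∫ x, |(f j x) ^ (1 / s) - (f k x) ^ (1 / s)| ^ (q * s) ∂μ < ε) ↔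
    (∀ ε > (0 : ℝ), ∃ N, ∀ j ≥ N, ∀ k ≥ N,
        ∫ x, |f j x - f k x| ^ q ∂μ < ε) :=
  stmt8_general μ q s hq hs f hpos hL
end
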